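/- Player 1 has an opacity-enforcing winning strategy in the original game G with secret objective given by DFA A if and only if Player 1 has a sure-winning strategy in the belief-augmented game for the reachability objective ◊𝓕_O, where 𝓕_O = {(s,q,b) : q ∈ F and b ∩ (S × (Q \ F)) ≠ ∅}. -/

import Mathlib

/-- Belief update: given belief `b` and observation `o`, the next belief. -/
def beliefUpdate {S A Q Ω Γ : Type} (T : S → A → S) (δ : Q → Γ → Q)
    (L : S → Γ) (O : S → A → S → Ω) (b : Set (S × Q)) (o : Ω) : Set (S × Q) :=
  {p | ∃ sq ∈ b, ∃ abar : A, O sq.1 abar p.1 = o ∧ T sq.1 abar = p.1 ∧ δ sq.2 (L p.1) = p.2}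

/-- The deterministic transition function of the belief-augmented game on
states `(s, q, b) : S × Q × Set (S × Q)`. -/
def Δb {S A Q Ω Γ : Type} (T : S → A → S) (δ : Q → Γ → Q) (L : S → Γ)
    (O : S → A → S → Ω) (v : S × Q × Set (S × Q)) (α : A) : S × Q × Set (S × Q) :=
  (T v.1 α, δ v.2.1 (L (T v.1 α)), beliefUpdate T δ L O v.2.2 (O v.1 α (T v.1 α)))

/-- The target set `𝓕_O` of opaque-winning states: `q ∈ F` and the belief
intersects `S × (Q \ F)`. -/
def FO {S Q : Type} (F : Set Q) : Set (S × Q × Set (S × Q)) :=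
  {v | v.2.1 ∈ F ∧ ∃ p ∈ v.2.2, p.2 ∉ F}

/-- The target set `𝓕 = S × F × 2^(S×Q)` of winning states. -/
def Fwin {S Q : Type} (F : Set Q) : Set (S × Q × Set (S × Q)) :=
  {v | v.2.1 ∈ F}

/-- The history of actions taken before step `i`. -/
def hist {A : Type} (a : ℕ → A) (i : ℕ) : List A :=
  List.ofFn (fun j : Fin i => a j.1)

/-- An infinite play `(vs, a)` of the belief-augmented game from `v`,
consistent with P1's strategy `π1` (used on P1's turns, `turn = true`) and
P2's strategy `π2` (used on P2's turns).  Since the game is deterministic,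
a history from a fixed start is identified with its action sequence. -/
def ConsistentV {S A Q Ω Γ : Type} (turn : S → Bool) (T : S → A → S)
    (δ : Q → Γ → Q) (L : S → Γ) (O : S → A → S → Ω)
    (π1 π2 : List A → A) (v : S × Q × Set (S × Q))
    (vs : ℕ → S × Q × Set (S × Q)) (a : ℕ → A) : Prop :=
  vs 0 = v ∧ (∀ i, vs (i + 1) = Δb T δ L O (vs i) (a i)) ∧
  (∀ i, turn (vs i).1 = true → a i = π1 (hist a i)) ∧
  (∀ i, turn (vs i).1 = false → a i = π2 (hist a i))

/-- An infinite play `(s, a)` of the original arena `G` from `s0`,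
consistent with strategies `π1` (on P1's turns) and `π2` (on P2's turns). -/
def ConsistentG {S A : Type} (turn : S → Bool) (T : S → A → S)
    (π1 π2 : List A → A) (s0 : S) (s : ℕ → S) (a : ℕ → A) : Prop :=
  s 0 = s0 ∧ (∀ i, s (i + 1) = T (s i) (a i)) ∧
  (∀ i, turn (s i) = true → a i = π1 (hist a i)) ∧
  (∀ i, turn (s i) = false → a i = π2 (hist a i))

/-- The DFA state traced along an infinite play of `G`. -/
def qtr {S Q Γ : Type} (δ : Q → Γ → Q) (L : S → Γ) (ι : Q) (s : ℕ → S) : ℕ → Q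
  | 0 => δ ι (L (s 0))
  | i + 1 => δ (qtr δ L ι s i) (L (s (i + 1)))

/-- At step `n`, the (finite prefix of the) play is opacity-enforcing winning:
its label sequence is accepted, and there is an observation-equivalent finite
play of `G` of the same length whose label sequence is not accepted. -/
def OWat {S A Q Ω Γ : Type} (turn : S → Bool) (T : S → A → S) (δ : Q → Γ → Q)
    (L : S → Γ) (O : S → A → S → Ω) (ι : Q) (F : Set Q) (s0 : S)
    (s : ℕ → S) (a : ℕ → A) (n : ℕ) : Prop :=
  qtr δ L ι s n ∈ F ∧
  ∃ (s' : ℕ → S) (a' : ℕ → A), s' 0 = s0 ∧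
    (∀ i < n, s' (i + 1) = T (s' i) (a' i)) ∧
    (∀ i < n, O (s' i) (a' i) (s' (i + 1)) = O (s i) (a i) (s (i + 1))) ∧
    qtr δ L ι s' n ∉ F

/-!
Along a play of the belief-augmented game from `(s0, δ ι (L s0), {(s0, δ ι (L s0))})`, the
first component is a play of `G`, the second is the DFA run on it, and, by induction on the
length, the third is exactly the set of pairs (end state, DFA state) of the plays of `G`
observation-equivalent to it so far: `beliefUpdate` extends each such play by one
observation-compatible move. Hence reaching `FO F` at step `n` says precisely that the prefix
of length `n` is accepted while some observation-equivalent prefix is not. Since plays of the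
two games correspond bijectively and consistency with a strategy (a function of the action
history) is preserved, the same strategy `π1` works in both games.
-/

section BeliefGame

variable {S A Q Ω Γ : Type} (T : S → A → S) (δ : Q → Γ → Q) (L : S → Γ)
  (O : S → A → S → Ω) (ι : Q) (s0 : S)

def observationBelief (s : ℕ → S) (a : ℕ → A) (n : ℕ) : Set (S × Q) :=
  {p | ∃ (s' : ℕ → S) (a' : ℕ → A), s' 0 = s0 ∧
    (∀ i < n, s' (i + 1) = T (s' i) (a' i)) ∧
    (∀ i < n, O (s' i) (a' i) (s' (i + 1)) = O (s i) (a i) (s (i + 1))) ∧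
    s' n = p.1 ∧ qtr δ L ι s' n = p.2}

lemma qtr_congr {s s' : ℕ → S} {n : ℕ} (h : ∀ i ≤ n, s i = s' i) :
    qtr δ L ι s n = qtr δ L ι s' n := by
  induction n with
  | zero => simp only [qtr, h 0 le_rfl]
  | succ n ih => simp only [qtr, ih fun i hi => h i (by omega), h (n + 1) le_rfl]

lemma observationBelief_zero (s : ℕ → S) (a : ℕ → A) :
    observationBelief T δ L O ι s0 s a 0 = {(s0, δ ι (L s0))} := by
  ext ⟨t, q⟩
  constructor
  · rintro ⟨s', a', h0, -, -, rfl, rfl⟩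
    simp [qtr, h0]
  · rintro ⟨⟩
    exact ⟨fun _ => s0, a, rfl, by omega, by omega, rfl, rfl⟩

lemma beliefUpdate_observationBelief (s : ℕ → S) (a : ℕ → A) (n : ℕ) :
    beliefUpdate T δ L O (observationBelief T δ L O ι s0 s a n) (O (s n) (a n) (s (n + 1)))
      = observationBelief T δ L O ι s0 s a (n + 1) := by
  ext ⟨t, q⟩
  constructor
  · rintro ⟨⟨u, r⟩, ⟨s', a', h0, htr, hobs, hu, hr⟩, b, hO, hT, hδ⟩
    subst hu hr
    have hs_eq : ∀ i ≤ n, Function.update s' (n + 1) t i = s' i := fun i hi =>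
      Function.update_of_ne (by omega) _ _
    have ha_eq : ∀ i < n, Function.update a' n b i = a' i := fun i hi =>
      Function.update_of_ne (by omega) _ _
    refine ⟨Function.update s' (n + 1) t, Function.update a' n b, ?_, fun i hi => ?_,
      fun i hi => ?_, by simp, ?_⟩
    · rw [hs_eq 0 (Nat.zero_le _), h0]
    · rcases Nat.lt_succ_iff_lt_or_eq.mp hi with hi | rfl
      · rw [hs_eq _ hi, hs_eq _ hi.le, ha_eq _ hi, htr _ hi]
      · simp [hT]
    · rcases Nat.lt_succ_iff_lt_or_eq.mp hi with hi | rfl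
      · rw [hs_eq _ hi, hs_eq _ hi.le, ha_eq _ hi, hobs _ hi]
      · simp [hO]
    · simp only [qtr, Function.update_self, hδ,
        ← qtr_congr δ L ι fun i hi => (hs_eq i hi).symm]
  · rintro ⟨s', a', h0, htr, hobs, rfl, rfl⟩
    refine ⟨(s' n, qtr δ L ι s' n), ⟨s', a', h0, fun i hi => htr i (by omega),
      fun i hi => hobs i (by omega), rfl, rfl⟩, a' n, ?_, ?_, rfl⟩
    · exact hobs n n.lt_succ_self
    · exact (htr n n.lt_succ_self).symm

lemma snd_eq_qtr_observationBelief {vs : ℕ → S × Q × Set (S × Q)} {a : ℕ → A}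
    (h0 : vs 0 = (s0, δ ι (L s0), {(s0, δ ι (L s0))}))
    (hstep : ∀ i, vs (i + 1) = Δb T δ L O (vs i) (a i)) (n : ℕ) :
    (vs n).2 = (qtr δ L ι (fun i => (vs i).1) n,
      observationBelief T δ L O ι s0 (fun i => (vs i).1) a n) := by
  induction n with
  | zero => simp [h0, qtr, observationBelief_zero]
  | succ n ih =>
    have hfst : (vs (n + 1)).1 = T (vs n).1 (a n) := by rw [hstep]; rfl
    rw [hstep n]
    change (δ (vs n).2.1 (L (T (vs n).1 (a n))),
      beliefUpdate T δ L O (vs n).2.2 (O (vs n).1 (a n) (T (vs n).1 (a n)))) = _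
    rw [ih, ← hfst]
    exact Prod.ext rfl (beliefUpdate_observationBelief T δ L O ι s0 (fun i => (vs i).1) a n)

lemma mem_FO_iff_OWat_of_snd_eq (turn : S → Bool) (F : Set Q) {v : S × Q × Set (S × Q)}
    {s : ℕ → S} {a : ℕ → A} {n : ℕ}
    (hv : v.2 = (qtr δ L ι s n, observationBelief T δ L O ι s0 s a n)) :
    v ∈ FO F ↔ OWat turn T δ L O ι F s0 s a n := by
  obtain ⟨t, q, b⟩ := v
  simp only [Prod.mk.injEq] at hv
  obtain ⟨rfl, rfl⟩ := hv
  constructor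
  · rintro ⟨hq, ⟨t, r⟩, ⟨s', a', h0, htr, hobs, rfl, rfl⟩, hr⟩
    exact ⟨hq, s', a', h0, htr, hobs, hr⟩
  · rintro ⟨hq, s', a', h0, htr, hobs, hr⟩
    exact ⟨hq, (s' n, qtr δ L ι s' n), ⟨s', a', h0, htr, hobs, rfl, rfl⟩, hr⟩

def beliefPlay (v : S × Q × Set (S × Q)) (a : ℕ → A) : ℕ → S × Q × Set (S × Q)
  | 0 => v
  | n + 1 => Δb T δ L O (beliefPlay v a n) (a n)

variable {T δ L O ι s0}

lemma ConsistentV.consistentG {turn : S → Bool} {π1 π2 : List A → A}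
    {vs : ℕ → S × Q × Set (S × Q)} {a : ℕ → A}
    (h : ConsistentV turn T δ L O π1 π2 (s0, δ ι (L s0), {(s0, δ ι (L s0))}) vs a) :
    ConsistentG turn T π1 π2 s0 (fun i => (vs i).1) a :=
  ⟨by simp [h.1], fun i => congrArg Prod.fst (h.2.1 i), h.2.2.1, h.2.2.2⟩

lemma ConsistentG.exists_consistentV {turn : S → Bool} {π1 π2 : List A → A} {s : ℕ → S}
    {a : ℕ → A} (h : ConsistentG turn T π1 π2 s0 s a) :
    ∃ vs, ConsistentV turn T δ L O π1 π2 (s0, δ ι (L s0), {(s0, δ ι (L s0))}) vs a ∧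
      (fun i => (vs i).1) = s := by
  set vs := beliefPlay T δ L O (s0, δ ι (L s0), {(s0, δ ι (L s0))}) a
  have hfst : (fun i => (vs i).1) = s := by
    funext i
    induction i with
    | zero => exact h.1.symm
    | succ i ih => rw [h.2.1, ← ih]; rfl
  refine ⟨vs, ⟨rfl, fun i => rfl, ?_, ?_⟩, hfst⟩ <;> rw [← hfst] at h
  exacts [h.2.2.1, h.2.2.2]

lemma ConsistentV.mem_FO_iff_OWat {turn : S → Bool} {F : Set Q} {π1 π2 : List A → A}
    {vs : ℕ → S × Q × Set (S × Q)} {a : ℕ → A} {n : ℕ}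
    (h : ConsistentV turn T δ L O π1 π2 (s0, δ ι (L s0), {(s0, δ ι (L s0))}) vs a) :
    vs n ∈ FO F ↔ OWat turn T δ L O ι F s0 (fun i => (vs i).1) a n :=
  mem_FO_iff_OWat_of_snd_eq T δ L O ι s0 turn F
    (snd_eq_qtr_observationBelief T δ L O ι s0 h.1 h.2.1 n)

end BeliefGame

theorem opaque_winning_iff_belief_game_reach_general
    {S A Q Ω Γ : Type}
    (turn : S → Bool) (T : S → A → S) (δ : Q → Γ → Q) (L : S → Γ)
    (O : S → A → S → Ω) (ι : Q) (F : Set Q) (s0 : S) :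
    (∃ π1 : List A → A, ∀ π2 : List A → A, ∀ (s : ℕ → S) (a : ℕ → A),
        ConsistentG turn T π1 π2 s0 s a →
        ∃ n, OWat turn T δ L O ι F s0 s a n) ↔
    (∃ π1 : List A → A, ∀ π2 : List A → A,
        ∀ (vs : ℕ → S × Q × Set (S × Q)) (a : ℕ → A),
        ConsistentV turn T δ L O π1 π2 (s0, δ ι (L s0), {(s0, δ ι (L s0))}) vs a →
        ∃ n, vs n ∈ FO F) := by
  constructor
  · rintro ⟨π1, hπ1⟩
    refine ⟨π1, fun π2 vs a hV => ?_⟩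
    obtain ⟨n, hn⟩ := hπ1 π2 _ a hV.consistentG
    exact ⟨n, hV.mem_FO_iff_OWat.2 hn⟩
  · rintro ⟨π1, hπ1⟩
    refine ⟨π1, fun π2 s a hG => ?_⟩
    obtain ⟨vs, hV, rfl⟩ := hG.exists_consistentV (δ := δ) (L := L) (O := O) (ι := ι)
    obtain ⟨n, hn⟩ := hπ1 π2 vs a hV
    exact ⟨n, hV.mem_FO_iff_OWat.1 hn⟩

/-- P1 has an opacity-enforcing winning strategy in the original
game `G` iff P1 has a sure-winning strategy in the belief-augmented game for
the reachability objective `◊ 𝓕_O`. -/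
theorem opaque_winning_iff_belief_game_reach
    {S A Q Ω Γ : Type} [Fintype S] [Fintype A] [Fintype Q]
    (turn : S → Bool) (T : S → A → S) (δ : Q → Γ → Q) (L : S → Γ)
    (O : S → A → S → Ω) (ι : Q) (F : Set Q) (s0 : S)
    (habs : ∀ q ∈ F, ∀ σ : Γ, δ q σ = q) :
    (∃ π1 : List A → A, ∀ π2 : List A → A, ∀ (s : ℕ → S) (a : ℕ → A),
        ConsistentG turn T π1 π2 s0 s a →
        ∃ n, OWat turn T δ L O ι F s0 s a n) ↔
    (∃ π1 : List A → A, ∀ π2 : List A → A,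
        ∀ (vs : ℕ → S × Q × Set (S × Q)) (a : ℕ → A),
        ConsistentV turn T δ L O π1 π2 (s0, δ ι (L s0), {(s0, δ ι (L s0))}) vs a →
        ∃ n, vs n ∈ FO F) :=
  opaque_winning_iff_belief_game_reach_general turn T δ L O ι F s0
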